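/- Let S be a regular tetrahedron in ℍ³ with edge length 2x, and let G be the plane containing one of its facets. Then the width of S determined by G equals arccosh( cosh(2x) / cosh( arcsinh( √(4/3) · sinh x ) ) ). -/

import Mathlib

noncomputable section

namespace HypSpace

/-- Inverse hyperbolic cosine. -/
def arcosh (x : ℝ) : ℝ := Real.log (x + Real.sqrt (x ^ 2 - 1))

/-- The Minkowski bilinear form on `ℝ^{d+1}` (signature `(d,1)`, the last
coordinate being timelike). -/
def mink (d : ℕ) (x y : EuclideanSpace ℝ (Fin (d + 1))) : ℝ :=
  (∑ i : Fin d, x i.castSucc * y i.castSucc) - x (Fin.last d) * y (Fin.last d)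

/-- The hyperboloid model of `d`-dimensional hyperbolic space: the upper sheet
of the two-sheeted hyperboloid `mink x x = -1`. -/
def Pt (d : ℕ) : Type := {x : EuclideanSpace ℝ (Fin (d + 1)) // mink d x x = -1 ∧ 0 < x (Fin.last d)}

variable {d : ℕ}

/-- Hyperbolic distance between two points of `ℍ^d`. -/
def hdist (p q : Pt d) : ℝ := arcosh (-(mink d p.1 q.1))

/-- The geodesic segment between `a` and `b`, described metrically via betweenness
(hyperbolic space is uniquely geodesic). -/
def seg (a b : Pt d) : Set (Pt d) := {p | hdist a p + hdist p b = hdist a b}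

/-- A set is (geodesically) convex if it contains the segment between any two of its points. -/
def IsConvexSet (C : Set (Pt d)) : Prop := ∀ a ∈ C, ∀ b ∈ C, seg a b ⊆ C

/-- The convex hull: the smallest convex set containing `A`. -/
def chull (A : Set (Pt d)) : Set (Pt d) := ⋂₀ {C | IsConvexSet C ∧ A ⊆ C}

/-- The totally geodesic hyperplane with (spacelike) normal vector `v`. -/
def plane (v : EuclideanSpace ℝ (Fin (d + 1))) : Set (Pt d) := {p | mink d v p.1 = 0}

/-- A hyperplane of `ℍ^d`: the trace on the hyperboloid of a linear hyperplane
with spacelike unit normal. -/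
def IsHyperplane (H : Set (Pt d)) : Prop := ∃ v, mink d v v = 1 ∧ H = plane v

/-- Distance from a point to a set. -/
def distPS (p : Pt d) (S : Set (Pt d)) : ℝ := sInf (hdist p '' S)

/-- Distance between two sets. -/
def distSS (A B : Set (Pt d)) : ℝ := sInf {r | ∃ a ∈ A, ∃ b ∈ B, hdist a b = r}

/-- `h` is the orthogonal projection of `g` onto `H`: the point of `H`
realizing the distance from `g` to `H`.  For a hyperplane `H` with `a ∈ H`,
`IsProj b H a` also expresses that `H` is orthogonal to the segment `ab` at `a`. -/
def IsProj (g : Pt d) (H : Set (Pt d)) (h : Pt d) : Prop :=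
  h ∈ H ∧ ∀ k ∈ H, hdist g h ≤ hdist g k

/-- Two hyperplanes are ultraparallel if they are disjoint and not asymptotically
parallel (their distance is positive, i.e. they admit a common perpendicular). -/
def Ultraparallel (H J : Set (Pt d)) : Prop :=
  IsHyperplane H ∧ IsHyperplane J ∧ H ∩ J = ∅ ∧ 0 < distSS H J

/-- `p` is an interior point of `C`. -/
def IsIntr (C : Set (Pt d)) (p : Pt d) : Prop := ∃ ε > 0, ∀ q, hdist p q < ε → q ∈ C

/-- `p` is a boundary point of the (closed) set `C`. -/
def IsBdry (C : Set (Pt d)) (p : Pt d) : Prop := p ∈ C ∧ ¬ IsIntr C p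

/-- `C` is bounded. -/
def IsBddSet (C : Set (Pt d)) : Prop := ∃ R, ∀ a ∈ C, ∀ b ∈ C, hdist a b ≤ R

/-- `C` is closed. -/
def IsClosedSet (C : Set (Pt d)) : Prop :=
  ∀ p : Pt d, (∀ ε > 0, ∃ q ∈ C, hdist p q < ε) → p ∈ C

/-- A convex body: a compact (closed and bounded) convex set with nonempty interior. -/
def IsBody (C : Set (Pt d)) : Prop :=
  IsConvexSet C ∧ IsBddSet C ∧ IsClosedSet C ∧ ∃ p, IsIntr C p

/-- The hyperplane `H` supports `C`: it meets `C` but misses its interior. -/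
def Supports (H C : Set (Pt d)) : Prop :=
  IsHyperplane H ∧ (H ∩ C).Nonempty ∧ ∀ p, IsIntr C p → p ∉ H

/-- The width of `C` determined by `H`, as the maximum distance from `H`
to a point of `C`. -/
def width (H C : Set (Pt d)) : ℝ := sSup ((fun c => distPS c H) '' C)

/-- The width of `C` determined by `H`, as the distance from `H` to a farthest
supporting hyperplane of `C` ultraparallel to `H`. -/
def widthUP (H C : Set (Pt d)) : ℝ :=
  sSup {r | ∃ J, Supports J C ∧ Ultraparallel H J ∧ distSS H J = r}

/-- The thickness of `C`: the minimum width over supporting hyperplanes. -/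
def thickness (C : Set (Pt d)) : ℝ := sInf {r | ∃ H, Supports H C ∧ width H C = r}

/-- The diameter of `C`. -/
def diam (C : Set (Pt d)) : ℝ := sSup {r | ∃ a ∈ C, ∃ b ∈ C, hdist a b = r}

/-- A body of constant width `δ`. -/
def ConstWidth (W : Set (Pt d)) (δ : ℝ) : Prop :=
  IsBody W ∧ ∀ H, Supports H W → width H W = δ

/-- A complete set of diameter `δ`. -/
def CompleteSet (C : Set (Pt d)) (δ : ℝ) : Prop :=
  diam C = δ ∧ ∀ x, x ∉ C → diam (C ∪ {x}) > δ

/-- A body of constant diameter `δ`. -/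
def ConstDiam (C : Set (Pt d)) (δ : ℝ) : Prop :=
  diam C = δ ∧ ∀ p, IsBdry C p → ∃ p' ∈ C, hdist p p' = δ

/-!
In the hyperboloid model the hyperplane `G` is `n^⊥` for a unit spacelike `n`, and the distance
from a point `p` to it is `arsinh |⟨n, p⟩|`. Orient `n` so that `⟨n, z⟩ ≥ 0`. The slab
`0 ≤ ⟨n, ·⟩ ≤ ⟨n, z⟩` is geodesically convex, so it contains the convex hull of the tetrahedron,
and the width is attained at the apex `z`. Its height comes from the Gram matrix: `u, v, w, n` span
`ℝ⁴`, so with `k = cosh 2x` one has `z = k / (1 + 2k) • (u + v + w) + ⟨n, z⟩ • n`, and `⟨z, z⟩ = -1`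
gives `cosh² (height) = 1 + ⟨n, z⟩² = 3k² / (1 + 2k) = cosh² (2x) / cosh² R`, which is hyperbolic
Pythagoras with `R = arsinh (√(4/3) sinh x)` the circumradius of the base.
-/

open Real

theorem arcosh_eq_real_arcosh : arcosh = Real.arcosh := rfl

section Minkowski

variable (x y z : EuclideanSpace ℝ (Fin (d + 1)))

theorem mink_comm : mink d x y = mink d y x := by
  simp only [mink, mul_comm]

theorem mink_add_left : mink d (x + y) z = mink d x z + mink d y z := by
  simp only [mink, PiLp.add_apply, add_mul, Finset.sum_add_distrib]
  ring

theorem mink_smul_left (c : ℝ) : mink d (c • x) y = c * mink d x y := by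
  simp only [mink, PiLp.smul_apply, smul_eq_mul, mul_sub, Finset.mul_sum, mul_assoc]

theorem mink_add_right : mink d x (y + z) = mink d x y + mink d x z := by
  rw [mink_comm, mink_add_left, mink_comm y, mink_comm z]

theorem mink_smul_right (c : ℝ) : mink d x (c • y) = c * mink d x y := by
  rw [mink_comm, mink_smul_left, mink_comm]

def minkForm (d : ℕ) : LinearMap.BilinForm ℝ (EuclideanSpace ℝ (Fin (d + 1))) :=
  LinearMap.mk₂ ℝ (mink d) mink_add_left (fun c x y => mink_smul_left x y c) mink_add_right
    (fun c x y => mink_smul_right x y c)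

theorem minkForm_apply : minkForm d x y = mink d x y := rfl

theorem mink_sub_left : mink d (x - y) z = mink d x z - mink d y z :=
  LinearMap.map_sub₂ (minkForm d) x y z

theorem mink_sub_right : mink d x (y - z) = mink d x y - mink d x z :=
  (minkForm d x).map_sub y z

theorem mink_neg_left : mink d (-x) y = -mink d x y :=
  LinearMap.map_neg₂ (minkForm d) x y

theorem mink_self_eq : mink d x x = ∑ i : Fin d, x i.castSucc ^ 2 - x (Fin.last d) ^ 2 := by
  simp only [mink, sq]

end Minkowski

section TimelikeComplement

variable {p w : EuclideanSpace ℝ (Fin (d + 1))}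

theorem sum_sq_le_last_sq_mul_mink_self (hp : mink d p p = -1) (hpw : mink d p w = 0) :
    ∑ i : Fin d, w i.castSucc ^ 2 ≤ p (Fin.last d) ^ 2 * mink d w w := by
  have hcross : p (Fin.last d) * w (Fin.last d) = ∑ i : Fin d, p i.castSucc * w i.castSucc := by
    simp only [mink] at hpw; linarith
  have hcs := Finset.sum_mul_sq_le_sq_mul_sq Finset.univ
    (fun i : Fin d => p i.castSucc) (fun i : Fin d => w i.castSucc)
  rw [← hcross, mul_pow] at hcs
  have hpt : p (Fin.last d) ^ 2 = 1 + ∑ i : Fin d, p i.castSucc ^ 2 := by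
    rw [mink_self_eq] at hp; linarith
  rw [mink_self_eq, mul_sub, hpt]
  rw [hpt] at hcs
  nlinarith

theorem one_le_last_sq (hp : mink d p p = -1) : 1 ≤ p (Fin.last d) ^ 2 := by
  rw [mink_self_eq] at hp
  nlinarith [Finset.sum_nonneg fun i (_ : i ∈ Finset.univ) => sq_nonneg (p (Fin.castSucc i))]

theorem mink_self_nonneg_of_mink_eq_zero (hp : mink d p p = -1) (hpw : mink d p w = 0) :
    0 ≤ mink d w w := by
  have := sum_sq_le_last_sq_mul_mink_self hp hpw
  have := one_le_last_sq hp
  nlinarith [Finset.sum_nonneg fun i (_ : i ∈ Finset.univ) => sq_nonneg (w (Fin.castSucc i))]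

theorem eq_zero_of_mink_eq_zero_of_mink_self_eq_zero (hp : mink d p p = -1)
    (hpw : mink d p w = 0) (hww : mink d w w = 0) : w = 0 := by
  have hsum := sum_sq_le_last_sq_mul_mink_self hp hpw
  rw [hww, mul_zero] at hsum
  have hspace : ∀ i : Fin d, w i.castSucc = 0 := fun i => pow_eq_zero_iff two_ne_zero |>.mp <|
    (Finset.sum_eq_zero_iff_of_nonneg fun j _ => sq_nonneg _).mp
      (le_antisymm hsum (Finset.sum_nonneg fun j _ => sq_nonneg _)) i (Finset.mem_univ i)
  have htime : w (Fin.last d) = 0 := by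
    rw [mink_self_eq, Finset.sum_eq_zero fun i _ => by rw [hspace i, sq, mul_zero]] at hww
    exact pow_eq_zero_iff two_ne_zero |>.mp (by linarith)
  ext j
  induction j using Fin.lastCases with
  | last => exact htime
  | cast i => exact hspace i

theorem neg_mink_self_le_sq_mink (hp : mink d p p = -1) (y : EuclideanSpace ℝ (Fin (d + 1))) :
    -mink d y y ≤ mink d p y ^ 2 := by
  have hperp : mink d p (y + mink d p y • p) = 0 := by
    rw [mink_add_right, mink_smul_right, hp]; ring
  have := mink_self_nonneg_of_mink_eq_zero hp hperp
  rw [mink_add_left, mink_add_right, mink_add_right, mink_smul_left, mink_smul_right,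
    mink_smul_left, mink_smul_right, mink_comm y p, hp] at this
  nlinarith

end TimelikeComplement

theorem one_le_neg_mink {p q : EuclideanSpace ℝ (Fin (d + 1))} (hp : mink d p p = -1)
    (hq : mink d q q = -1) (hpt : 0 < p (Fin.last d)) (hqt : 0 < q (Fin.last d)) :
    1 ≤ -mink d p q := by
  set C := ∑ i : Fin d, p i.castSucc * q i.castSucc
  have hcs := Finset.sum_mul_sq_le_sq_mul_sq Finset.univ
    (fun i : Fin d => p i.castSucc) (fun i : Fin d => q i.castSucc)
  have hamgm : 2 * C ≤ ∑ i : Fin d, p i.castSucc ^ 2 + ∑ i : Fin d, q i.castSucc ^ 2 := by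
    rw [← Finset.sum_add_distrib, Finset.mul_sum]
    exact Finset.sum_le_sum fun i _ => by nlinarith [sq_nonneg (p i.castSucc - q i.castSucc)]
  rw [mink_self_eq] at hp hq
  -- `(p_t q_t)^2 = (1 + |p'|^2)(1 + |q'|^2) ≥ (1 + C)^2`
  have hsq : (1 + C) ^ 2 ≤ (p (Fin.last d) * q (Fin.last d)) ^ 2 := by nlinarith
  have : 1 + C ≤ p (Fin.last d) * q (Fin.last d) :=
    abs_le_of_sq_le_sq' hsq (by positivity) |>.2
  simp only [mink]; linarith

theorem last_pos_of_mink_neg (p : Pt d) {y : EuclideanSpace ℝ (Fin (d + 1))}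
    (hy : mink d y y = -1) (hpy : mink d p.1 y < 0) : 0 < y (Fin.last d) := by
  by_contra! hle
  have hlt : y (Fin.last d) < 0 := hle.lt_of_ne fun h0 => by
    have := one_le_last_sq hy; rw [h0] at this; norm_num at this
  have hneg : mink d (-y) (-y) = -1 := by
    rw [mink_neg_left, mink_comm, mink_neg_left, hy]; ring
  have := one_le_neg_mink p.2.1 hneg p.2.2 (by simpa using hlt)
  rw [mink_comm, mink_neg_left, mink_comm] at this
  linarith

theorem one_le_neg_mink_pt (p q : Pt d) : 1 ≤ -mink d p.1 q.1 :=
  one_le_neg_mink p.2.1 q.2.1 p.2.2 q.2.2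

theorem cosh_hdist (p q : Pt d) : cosh (hdist p q) = -mink d p.1 q.1 :=
  Real.cosh_arcosh (one_le_neg_mink_pt p q)

theorem hdist_nonneg (p q : Pt d) : 0 ≤ hdist p q :=
  Real.arcosh_nonneg (one_le_neg_mink_pt p q)

theorem mink_eq_neg_cosh {p q : Pt d} {r : ℝ} (h : hdist p q = r) : mink d p.1 q.1 = -cosh r := by
  rw [← h, cosh_hdist, neg_neg]

theorem hdist_eq_of_cosh {p q : Pt d} {r : ℝ} (hr : 0 ≤ r) (h : -mink d p.1 q.1 = cosh r) :
    hdist p q = r := by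
  rw [hdist, arcosh_eq_real_arcosh, h, Real.arcosh_cosh hr]

theorem eq_of_hdist_eq_zero {p q : Pt d} (h : hdist p q = 0) : p = q := by
  have hpq : mink d p.1 q.1 = -1 := by
    have := cosh_hdist p q; rw [h, cosh_zero] at this; linarith
  have hperp : mink d p.1 (q.1 - p.1) = 0 := by
    rw [mink_sub_right, hpq, p.2.1]; ring
  have hnull : mink d (q.1 - p.1) (q.1 - p.1) = 0 := by
    rw [mink_sub_left, mink_sub_right, mink_sub_right, q.2.1, p.2.1, mink_comm q.1, hpq]; ring
  exact (Subtype.ext (sub_eq_zero.mp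
    (eq_zero_of_mink_eq_zero_of_mink_self_eq_zero p.2.1 hperp hnull))).symm

section Plane

variable {n : EuclideanSpace ℝ (Fin (d + 1))}

theorem mink_sub_normal_self (hn : mink d n n = 1) (c : Pt d) :
    mink d (c.1 - mink d n c.1 • n) (c.1 - mink d n c.1 • n) = -1 - mink d n c.1 ^ 2 := by
  rw [mink_sub_left, mink_sub_right, mink_sub_right, mink_smul_left, mink_smul_right,
    mink_smul_left, mink_smul_right, mink_comm c.1 n, c.2.1, hn]
  ring

theorem arsinh_abs_mink_le_hdist (hn : mink d n n = 1) (c : Pt d) {q : Pt d}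
    (hq : q ∈ plane n) : arsinh |mink d n c.1| ≤ hdist c q := by
  set s := mink d n c.1
  have hqc : mink d q.1 (c.1 - s • n) = mink d q.1 c.1 := by
    rw [mink_sub_right, mink_smul_right, mink_comm q.1 n, show mink d n q.1 = 0 from hq]; ring
  have hrcs := neg_mink_self_le_sq_mink q.2.1 (c.1 - s • n)
  rw [hqc, mink_sub_normal_self hn, mink_comm q.1] at hrcs
  have hcosh : cosh (arsinh |s|) ≤ cosh (hdist c q) := by
    rw [cosh_arsinh, sq_abs, cosh_hdist, Real.sqrt_le_left (by linarith [one_le_neg_mink_pt c q])]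
    nlinarith
  simpa only [abs_of_nonneg (arsinh_nonneg_iff.mpr (abs_nonneg s)),
    abs_of_nonneg (hdist_nonneg c q)] using cosh_le_cosh.mp hcosh

/-- The foot of the perpendicular from `c` is the normalisation of `c - ⟨n, c⟩ n`. -/
theorem exists_mem_plane_hdist_eq (hn : mink d n n = 1) (c : Pt d) :
    ∃ q ∈ plane n, hdist c q = arsinh |mink d n c.1| := by
  set s := mink d n c.1
  set r := √(1 + s ^ 2)
  have hr : 0 < r := Real.sqrt_pos.mpr (by positivity)
  have hr2 : r ^ 2 = 1 + s ^ 2 := Real.sq_sqrt (by positivity)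
  set y := r⁻¹ • (c.1 - s • n)
  have hy : mink d y y = -1 := by
    rw [mink_smul_left, mink_smul_right, mink_sub_normal_self hn]
    field_simp
    linarith
  have hcy : mink d c.1 y = -r := by
    rw [mink_smul_right, mink_sub_right, mink_smul_right, c.2.1, mink_comm c.1 n]
    field_simp
    linarith
  refine ⟨⟨y, hy, last_pos_of_mink_neg c hy (by linarith)⟩, ?_, ?_⟩
  · show mink d n y = 0
    rw [mink_smul_right, mink_sub_right, mink_smul_right, hn]; ring
  · apply hdist_eq_of_cosh (arsinh_nonneg_iff.mpr (abs_nonneg s))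
    rw [hcy, neg_neg, cosh_arsinh, sq_abs]

theorem distPS_plane (hn : mink d n n = 1) (c : Pt d) :
    distPS c (plane n) = arsinh |mink d n c.1| := by
  obtain ⟨q, hq, hcq⟩ := exists_mem_plane_hdist_eq hn c
  refine IsLeast.csInf_eq ⟨⟨q, hq, hcq⟩, ?_⟩
  rintro _ ⟨q', hq', rfl⟩
  exact arsinh_abs_mink_le_hdist hn c hq'

end Plane

theorem sinh_hdist_smul_of_mem_seg {a b p : Pt d} (hp : p ∈ seg a b) :
    sinh (hdist a b) • p.1 = sinh (hdist p b) • a.1 + sinh (hdist a p) • b.1 := by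
  set α := hdist a p
  set β := hdist p b
  have hsum : α + β = hdist a b := hp
  have hap : mink d a.1 p.1 = -cosh α := by linarith [cosh_hdist a p]
  have hpb : mink d p.1 b.1 = -cosh β := by linarith [cosh_hdist p b]
  have hab : mink d a.1 b.1 = -cosh (α + β) := by linarith [hsum ▸ cosh_hdist a b]
  rw [← hsum, ← sub_eq_zero, ← sub_sub]
  set e := sinh (α + β) • p.1 - sinh β • a.1 - sinh α • b.1
  have hea : mink d a.1 e = 0 := by
    rw [mink_sub_right, mink_sub_right, mink_smul_right, mink_smul_right, mink_smul_right,
      hap, a.2.1, hab, sinh_add, cosh_add]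
    linear_combination (-sinh β) * cosh_sq α
  have heb : mink d b.1 e = 0 := by
    rw [mink_sub_right, mink_sub_right, mink_smul_right, mink_smul_right, mink_smul_right,
      mink_comm b.1, hpb, mink_comm b.1, hab, b.2.1, sinh_add, cosh_add]
    linear_combination (-sinh α) * cosh_sq β
  have hep : mink d p.1 e = 0 := by
    rw [mink_sub_right, mink_sub_right, mink_smul_right, mink_smul_right, mink_smul_right,
      p.2.1, mink_comm p.1, hap, hpb, sinh_add]
    ring
  -- `e` is orthogonal to the timelike vector `a` and null, hence zero.
  have hee : mink d e e = 0 := by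
    change mink d e (sinh (α + β) • p.1 - sinh β • a.1 - sinh α • b.1) = 0
    rw [mink_sub_right, mink_sub_right, mink_smul_right, mink_smul_right, mink_smul_right,
      mink_comm e, hep, mink_comm e, hea, mink_comm e, heb]
    ring
  exact eq_zero_of_mink_eq_zero_of_mink_self_eq_zero a.2.1 hea hee

theorem sinh_add_sinh_le_sinh_add {α β : ℝ} (hα : 0 ≤ α) (hβ : 0 ≤ β) :
    sinh α + sinh β ≤ sinh (α + β) := by
  rw [sinh_add]
  nlinarith [one_le_cosh α, one_le_cosh β, sinh_nonneg_iff.mpr hα, sinh_nonneg_iff.mpr hβ]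

/-- The region between a hyperplane and one of its equidistant hypersurfaces is convex. -/
theorem isConvexSet_slab (n : EuclideanSpace ℝ (Fin (d + 1))) (c : ℝ) :
    IsConvexSet {p : Pt d | 0 ≤ mink d n p.1 ∧ mink d n p.1 ≤ c} := by
  rintro a ⟨ha0, hac⟩ b ⟨hb0, hbc⟩ p hp
  rcases (hdist_nonneg a b).eq_or_lt with hab | hab
  · have hap : hdist a p = 0 := by
      linarith [show hdist a p + hdist p b = hdist a b from hp, hdist_nonneg a p,
        hdist_nonneg p b]
    rw [← eq_of_hdist_eq_zero hap]
    exact ⟨ha0, hac⟩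
  have hcomb := congrArg (mink d n) (sinh_hdist_smul_of_mem_seg hp)
  simp only [mink_smul_right, mink_add_right] at hcomb
  have hγ : 0 < sinh (hdist a b) := sinh_pos_iff.mpr hab
  have hα := sinh_nonneg_iff.mpr (hdist_nonneg a p)
  have hβ := sinh_nonneg_iff.mpr (hdist_nonneg p b)
  have hαβ : sinh (hdist p b) + sinh (hdist a p) ≤ sinh (hdist a b) := by
    rw [← show hdist a p + hdist p b = hdist a b from hp, add_comm (sinh _)]
    exact sinh_add_sinh_le_sinh_add (hdist_nonneg a p) (hdist_nonneg p b)
  constructor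
  · nlinarith [mul_nonneg hβ ha0, mul_nonneg hα hb0]
  · nlinarith [mul_le_mul_of_nonneg_left hac hβ, mul_le_mul_of_nonneg_left hbc hα,
      mul_le_mul_of_nonneg_right hαβ (ha0.trans hac)]

theorem subset_chull (A : Set (Pt d)) : A ⊆ chull A :=
  Set.subset_sInter fun _ hC => hC.2

theorem chull_subset {A C : Set (Pt d)} (hC : IsConvexSet C) (hAC : A ⊆ C) : chull A ⊆ C :=
  Set.sInter_subset_of_mem ⟨hC, hAC⟩

theorem width_plane_chull {n : EuclideanSpace ℝ (Fin (d + 1))} (hn : mink d n n = 1)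
    {A : Set (Pt d)} {c : ℝ} (hA : ∀ p ∈ A, 0 ≤ mink d n p.1 ∧ mink d n p.1 ≤ c)
    {z : Pt d} (hzA : z ∈ A) (hz : mink d n z.1 = c) :
    width (plane n) (chull A) = arsinh c := by
  have hc : 0 ≤ c := hz ▸ (hA z hzA).1
  have hslab := chull_subset (isConvexSet_slab n c) hA
  refine IsGreatest.csSup_eq ⟨⟨z, subset_chull A hzA, ?_⟩, ?_⟩
  · beta_reduce
    rw [distPS_plane hn, hz, abs_of_nonneg hc]
  · rintro _ ⟨p, hp, rfl⟩
    obtain ⟨hp0, hpc⟩ := hslab hp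
    beta_reduce
    rw [distPS_plane hn, abs_of_nonneg hp0]
    exact arsinh_le_arsinh.mpr hpc

theorem linearIndependent_of_det_bilinForm_gram_ne_zero {R V ι : Type*} [CommRing R]
    [NoZeroDivisors R] [AddCommGroup V] [Module R V] [Fintype ι] [DecidableEq ι]
    (B : LinearMap.BilinForm R V) {b : ι → V}
    (h : (Matrix.of fun i j => B (b i) (b j)).det ≠ 0) : LinearIndependent R b := by
  rw [Fintype.linearIndependent_iff]
  intro g hg
  refine congrFun (Matrix.eq_zero_of_vecMul_eq_zero h (funext fun j => ?_))
  simpa [Matrix.vecMul, dotProduct] using congrArg (B · (b j)) hg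

theorem mink_eq_zero_of_span_eq_top {ι : Type*} {b : ι → EuclideanSpace ℝ (Fin (d + 1))}
    (hb : Submodule.span ℝ (Set.range b) = ⊤) {e : EuclideanSpace ℝ (Fin (d + 1))}
    (he : ∀ i, mink d e (b i) = 0) (y : EuclideanSpace ℝ (Fin (d + 1))) : mink d e y = 0 :=
  LinearMap.congr_fun (LinearMap.ext_on_range hb (f := minkForm d e) (g := 0) he) y

section RegularTetrahedron

variable {r : ℝ} {u v w z : Pt 3} {n : EuclideanSpace ℝ (Fin 4)}

theorem linearIndependent_facet_normal (hr : 0 < r) (huv : hdist u v = r) (huw : hdist u w = r)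
    (hvw : hdist v w = r) (hn : mink 3 n n = 1) (hnu : mink 3 n u.1 = 0)
    (hnv : mink 3 n v.1 = 0) (hnw : mink 3 n w.1 = 0) :
    LinearIndependent ℝ ![u.1, v.1, w.1, n] := by
  have hk : 1 < cosh r := one_lt_cosh.mpr hr.ne'
  apply linearIndependent_of_det_bilinForm_gram_ne_zero (minkForm 3)
  have hgram :
      (Matrix.of fun i j => minkForm 3 (![u.1, v.1, w.1, n] i) (![u.1, v.1, w.1, n] j)) =
      !![-1, -cosh r, -cosh r, 0; -cosh r, -1, -cosh r, 0; -cosh r, -cosh r, -1, 0; 0, 0, 0, 1] := by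
    ext i j
    fin_cases i <;> fin_cases j <;>
      simp [minkForm_apply, u.2.1, v.2.1, w.2.1, hn, hnu, hnv, hnw, mink_eq_neg_cosh huv,
        mink_eq_neg_cosh huw, mink_eq_neg_cosh hvw, mink_comm _ n, mink_comm v.1 u.1,
        mink_comm w.1 u.1, mink_comm w.1 v.1]
  have hdet : (!![-1, -cosh r, -cosh r, 0; -cosh r, -1, -cosh r, 0; -cosh r, -cosh r, -1, 0;
      0, 0, 0, 1] : Matrix (Fin 4) (Fin 4) ℝ).det = -((cosh r - 1) ^ 2 * (1 + 2 * cosh r)) := by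
    simp [Matrix.det_succ_row_zero, Fin.sum_univ_succ, Fin.succAbove]
    ring
  rw [hgram, hdet, neg_ne_zero]
  exact mul_ne_zero (pow_ne_zero 2 (sub_ne_zero.mpr hk.ne')) (by positivity)

/-- The apex is `k / (1 + 2k) • (u + v + w) + ⟨n, z⟩ • n` with `k = cosh r`. -/
theorem one_add_sq_mink_normal_apex (hr : 0 < r) (huv : hdist u v = r) (huw : hdist u w = r)
    (huz : hdist u z = r) (hvw : hdist v w = r) (hvz : hdist v z = r) (hwz : hdist w z = r)
    (hn : mink 3 n n = 1) (hnu : mink 3 n u.1 = 0) (hnv : mink 3 n v.1 = 0)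
    (hnw : mink 3 n w.1 = 0) :
    1 + mink 3 n z.1 ^ 2 = 3 * cosh r ^ 2 / (1 + 2 * cosh r) := by
  have hden : 0 < 1 + 2 * cosh r := by positivity
  set a := cosh r / (1 + 2 * cosh r)
  have ha : a * (1 + 2 * cosh r) = cosh r := div_mul_cancel₀ _ hden.ne'
  clear_value a
  set c := mink 3 n z.1
  set e := z.1 - a • (u.1 + v.1 + w.1) - c • n
  have hexpand : ∀ y, mink 3 e y =
      mink 3 z.1 y - a * (mink 3 u.1 y + mink 3 v.1 y + mink 3 w.1 y) - c * mink 3 n y := by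
    intro y
    simp only [e, mink_sub_left, mink_smul_left, mink_add_left]
  have hspan : Submodule.span ℝ (Set.range ![u.1, v.1, w.1, n]) = ⊤ :=
    (linearIndependent_facet_normal hr huv huw hvw hn hnu hnv hnw).span_eq_top_of_card_eq_finrank
      (by simp)
  have he : ∀ i, mink 3 e (![u.1, v.1, w.1, n] i) = 0 := by
    intro i
    fin_cases i <;>
      simp only [hexpand, Fin.zero_eta, Fin.mk_one, Fin.reduceFinMk, Matrix.cons_val,
        u.2.1, v.2.1, w.2.1, hn, mink_comm _ n, hnu, hnv, hnw, mink_comm z.1, mink_comm v.1 u.1,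
        mink_comm w.1 u.1, mink_comm w.1 v.1, mink_eq_neg_cosh huv, mink_eq_neg_cosh huw,
        mink_eq_neg_cosh huz, mink_eq_neg_cosh hvw, mink_eq_neg_cosh hvz, mink_eq_neg_cosh hwz]
    all_goals linarith
  have hez := mink_eq_zero_of_span_eq_top hspan he z.1
  rw [hexpand, z.2.1, mink_eq_neg_cosh huz, mink_eq_neg_cosh hvz, mink_eq_neg_cosh hwz] at hez
  rw [eq_div_iff hden.ne']
  linear_combination (-(1 + 2 * cosh r)) * hez + 3 * cosh r * ha

end RegularTetrahedron

theorem IsHyperplane.exists_normal {G : Set (Pt d)} (hG : IsHyperplane G) (z : Pt d) :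
    ∃ n, mink d n n = 1 ∧ G = plane n ∧ 0 ≤ mink d n z.1 := by
  obtain ⟨n, hn, rfl⟩ := hG
  rcases le_total 0 (mink d n z.1) with hz | hz
  · exact ⟨n, hn, rfl, hz⟩
  · refine ⟨-n, ?_, ?_, ?_⟩
    · rw [mink_neg_left, mink_comm, mink_neg_left, hn, neg_neg]
    · ext p
      show mink d n p.1 = 0 ↔ mink d (-n) p.1 = 0
      rw [mink_neg_left, neg_eq_zero]
    · rw [mink_neg_left]; linarith

/-- With `k = cosh 2x = 1 + 2 sinh² x`, `cosh² (arsinh (√(4/3) sinh x)) = (1 + 2k) / 3`. -/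
theorem arsinh_eq_arcosh_of_one_add_sq {x c : ℝ} (hc : 0 ≤ c)
    (h : 1 + c ^ 2 = 3 * cosh (2 * x) ^ 2 / (1 + 2 * cosh (2 * x))) :
    arsinh c = arcosh (cosh (2 * x) / cosh (arsinh (√(4 / 3) * sinh x))) := by
  have hk' : cosh (2 * x) = 1 + 2 * sinh x ^ 2 := by rw [cosh_two_mul, cosh_sq]; ring
  set k := cosh (2 * x)
  have hk : 1 ≤ k := one_le_cosh _
  have hR : cosh (arsinh (√(4 / 3) * sinh x)) = √((1 + 2 * k) / 3) := by
    rw [cosh_arsinh, mul_pow, Real.sq_sqrt (by norm_num), hk']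
    ring_nf
  have hRpos : 0 < √((1 + 2 * k) / 3) := Real.sqrt_pos.mpr (by positivity)
  have hcosh : cosh (arsinh c) = k / √((1 + 2 * k) / 3) := by
    rw [cosh_arsinh, eq_div_iff hRpos.ne', ← Real.sqrt_mul (by positivity), h,
      show 3 * k ^ 2 / (1 + 2 * k) * ((1 + 2 * k) / 3) = k ^ 2 by field_simp,
      Real.sqrt_sq (by linarith)]
  rw [hR, ← hcosh, arcosh_eq_real_arcosh, Real.arcosh_cosh (arsinh_nonneg_iff.mpr hc)]

/-- Example 3: the width of the regular tetrahedron of edge `2x`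
determined by a facet plane. -/
theorem width_of_regular_tetrahedron_facet (x : ℝ) (hx : 0 < x) (u v w z : Pt 3)
    (huv : hdist u v = 2 * x) (huw : hdist u w = 2 * x) (huz : hdist u z = 2 * x)
    (hvw : hdist v w = 2 * x) (hvz : hdist v z = 2 * x) (hwz : hdist w z = 2 * x)
    (G : Set (Pt 3)) (hG : IsHyperplane G)
    (huG : u ∈ G) (hvG : v ∈ G) (hwG : w ∈ G) :
    width G (chull {u, v, w, z}) =
      arcosh (Real.cosh (2 * x) / Real.cosh (Real.arsinh (Real.sqrt (4 / 3) * Real.sinh x))) := by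
  obtain ⟨n, hn, rfl, hz⟩ := hG.exists_normal z
  have hu : mink 3 n u.1 = 0 := huG
  have hv : mink 3 n v.1 = 0 := hvG
  have hw : mink 3 n w.1 = 0 := hwG
  have hslab : ∀ p ∈ ({u, v, w, z} : Set (Pt 3)),
      0 ≤ mink 3 n p.1 ∧ mink 3 n p.1 ≤ mink 3 n z.1 := by
    rintro p (rfl | rfl | rfl | rfl)
    exacts [⟨hu.ge, hu.trans_le hz⟩, ⟨hv.ge, hv.trans_le hz⟩, ⟨hw.ge, hw.trans_le hz⟩,
      ⟨hz, le_rfl⟩]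
  rw [width_plane_chull hn hslab (by simp) rfl]
  exact arsinh_eq_arcosh_of_one_add_sq hz <|
    one_add_sq_mink_normal_apex (by positivity) huv huw huz hvw hvz hwz hn hu hv hw

end HypSpace
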